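/- arXiv:2308.05185 — 3 statements merged into one kernel-verified Lean document; each statement's English description precedes it below -/
import Mathlib

section
/- The operators a = (1/(2Ω))·[[-|ω|, -e^{-iθ}(Ω+iδ)],[e^{iθ}(Ω-iδ), |ω|]] and b = (1/(2Ω))·[[-|ω|, e^{-iθ}(Ω-iδ)],[-e^{iθ}(Ω+iδ), |ω|]] satisfy the pseudofermionic relations ab + ba = I and a² = b² = 0. -/
open Matrix Complex

/-- The pseudofermionic lowering operator a. -/
noncomputable def pfa (δ θ ω Ω : ℝ) : Matrix (Fin 2) (Fin 2) ℂ :=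
  ((1 : ℂ) / (2 * (Ω : ℂ))) •
    !![(-ω : ℂ), -Complex.exp (-(θ : ℂ) * Complex.I) * ((Ω : ℂ) + (δ : ℂ) * Complex.I);
       Complex.exp ((θ : ℂ) * Complex.I) * ((Ω : ℂ) - (δ : ℂ) * Complex.I), (ω : ℂ)]

/-- The pseudofermionic raising operator b. -/
noncomputable def pfb (δ θ ω Ω : ℝ) : Matrix (Fin 2) (Fin 2) ℂ :=
  ((1 : ℂ) / (2 * (Ω : ℂ))) •
    !![(-ω : ℂ), Complex.exp (-(θ : ℂ) * Complex.I) * ((Ω : ℂ) - (δ : ℂ) * Complex.I);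
       -Complex.exp ((θ : ℂ) * Complex.I) * ((Ω : ℂ) + (δ : ℂ) * Complex.I), (ω : ℂ)]

set_option maxHeartbeats 2000000 in
theorem pseudofermionic_relations (δ θ ω Ω : ℝ) (hω : 0 < ω) (hδω : δ ^ 2 < ω ^ 2)
    (hΩ : Ω = Real.sqrt (ω ^ 2 - δ ^ 2)) :
    pfa δ θ ω Ω * pfb δ θ ω Ω + pfb δ θ ω Ω * pfa δ θ ω Ω = 1 ∧
    pfa δ θ ω Ω * pfa δ θ ω Ω = 0 ∧
    pfb δ θ ω Ω * pfb δ θ ω Ω = 0 := by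
  have hΩpos : 0 < Ω := by rw [hΩ]; exact Real.sqrt_pos.mpr (by linarith)
  have hΩ2 : (Ω : ℂ) ^ 2 = (ω : ℂ) ^ 2 - (δ : ℂ) ^ 2 := by
    have : Ω ^ 2 = ω ^ 2 - δ ^ 2 := by rw [hΩ, Real.sq_sqrt (by linarith)]
    exact_mod_cast congrArg (Complex.ofReal ·) this
  have hΩne : (Ω : ℂ) ≠ 0 := by exact_mod_cast hΩpos.ne'
  have hEF : Complex.exp (-((θ : ℂ) * Complex.I)) * Complex.exp ((θ : ℂ) * Complex.I) = 1 := by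
    rw [← Complex.exp_add]; ring_nf; exact Complex.exp_zero
  set F := Complex.exp (-((θ : ℂ) * Complex.I)) with hFdef
  set E := Complex.exp ((θ : ℂ) * Complex.I) with hEdef
  refine ⟨?_, ?_, ?_⟩ <;>
  · ext i j
    fin_cases i <;> fin_cases j <;>
      simp only [pfa, pfb, Matrix.add_apply, Matrix.mul_apply, Fin.sum_univ_two,
        Matrix.smul_apply, Matrix.of_apply, Matrix.one_apply, Matrix.zero_apply, Fin.mk_zero, Fin.mk_one,
        cons_val', cons_val_zero, cons_val_one, head_cons, head_fin_const, empty_val',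
        cons_val_fin_one, smul_eq_mul, neg_mul, ← hFdef, ← hEdef, if_true, if_false,
        Fin.zero_eq_one_iff, Fin.one_eq_zero_iff, Nat.succ_ne_self] <;>
      (try field_simp) <;>
      first
        | ring1
        | linear_combination (2*(δ:ℂ)^2*F*E) * Complex.I_sq +
            (2*(Ω:ℂ)^2 - 2*(δ:ℂ)^2) * hEF - 2 * hΩ2
        | linear_combination ((δ:ℂ)^2*F*E) * Complex.I_sq +
            (-(δ:ℂ)^2 - (Ω:ℂ)^2) * hEF - hΩ2
        | linear_combination (4*(Ω:ℂ)^2*(δ:ℂ)^2*F*E) * Complex.I_sq +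
            (-4*(Ω:ℂ)^2*(δ:ℂ)^2 - 4*(Ω:ℂ)^4) * hEF - (4*(Ω:ℂ)^2) * hΩ2
end

section
/- With a and b as above, the effective Hamiltonian H_eff = (1/2)·[[-iδ, e^{-iθ}|ω|],[e^{iθ}|ω|, iδ]] satisfies H_eff = Ω(ba − (1/2)I). -/
open Matrix Complex

/-- The effective Hamiltonian. -/
noncomputable def Heff (δ θ ω : ℝ) : Matrix (Fin 2) (Fin 2) ℂ :=
  ((1 : ℂ) / 2) •
    !![(-(δ : ℂ)) * Complex.I, Complex.exp (-(θ : ℂ) * Complex.I) * (ω : ℂ);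
       Complex.exp ((θ : ℂ) * Complex.I) * (ω : ℂ), (δ : ℂ) * Complex.I]

set_option maxHeartbeats 1000000 in
theorem Heff_eq_pseudofermion_number (δ θ ω Ω : ℝ) (hω : 0 < ω) (hδω : δ ^ 2 < ω ^ 2)
    (hΩ : Ω = Real.sqrt (ω ^ 2 - δ ^ 2)) :
    Heff δ θ ω = (Ω : ℂ) • (pfb δ θ ω Ω * pfa δ θ ω Ω - ((1 : ℂ) / 2) • 1) := by
  have hΩpos : 0 < Ω := by
    rw [hΩ]; exact Real.sqrt_pos.mpr (by linarith)
  have hΩsq : (Ω : ℂ) ^ 2 = (ω : ℂ) ^ 2 - (δ : ℂ) ^ 2 := by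
    have h : Ω ^ 2 = ω ^ 2 - δ ^ 2 := by
      rw [hΩ]; exact Real.sq_sqrt (by linarith)
    exact_mod_cast congrArg (Complex.ofReal ·) h
  have hΩne : (Ω : ℂ) ≠ 0 := by exact_mod_cast hΩpos.ne'
  have hexp : Complex.exp (-(θ : ℂ) * Complex.I) * Complex.exp ((θ : ℂ) * Complex.I) = 1 := by
    rw [← Complex.exp_add]; ring_nf; exact Complex.exp_zero
  have hexp' : Complex.exp (-(Complex.I * (θ:ℂ))) * Complex.exp (Complex.I * (θ:ℂ)) = 1 := by
    rw [← Complex.exp_add]; ring_nf; exact Complex.exp_zero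
  have hI : Complex.I ^ 2 = -1 := Complex.I_sq
  rw [Heff, pfa, pfb, Matrix.smul_mul, Matrix.mul_smul, Matrix.mul_fin_two, smul_smul]
  ext i j
  fin_cases i <;> fin_cases j <;>
    simp only [Matrix.of_apply, Matrix.smul_apply, Matrix.sub_apply, Matrix.one_apply, Matrix.cons_val', Matrix.cons_val_zero, Matrix.cons_val_one, Matrix.head_cons, Matrix.empty_val', Matrix.cons_val_fin_one, smul_eq_mul, Fin.zero_eta, Fin.mk_one, ne_eq, one_ne_zero, zero_ne_one, not_false_eq_true, if_true, if_false, Matrix.one_apply_eq, Matrix.one_apply_ne] <;>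
    field_simp <;> ring_nf
  · linear_combination (2*(δ:ℂ)*Complex.I*(Ω:ℂ) - (δ:ℂ)^2*Complex.I^2 - (Ω:ℂ)^2) * hexp' + hΩsq + (-(δ:ℂ)^2) * hI
  · linear_combination (-(2*(δ:ℂ)*Complex.I*(Ω:ℂ)) - (δ:ℂ)^2*Complex.I^2 - (Ω:ℂ)^2) * hexp' + hΩsq + (-(δ:ℂ)^2) * hI
end

section
/- The intertwining relation S_Ψ·N = N*·S_Ψ holds, where N = ba and N* is its conjugate transpose. -/
open Matrix Complex

/-- The metric operator S_Ψ (with the normalization 2|k|² = 1). -/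
noncomputable def Spsi (δ θ ω Ω : ℝ) : Matrix (Fin 2) (Fin 2) ℂ :=
  ((ω : ℂ) ^ 2 / (2 * (Ω : ℂ) ^ 2)) •
    !![1, ((δ : ℂ) / (ω : ℂ)) * Complex.I * Complex.exp (-(θ : ℂ) * Complex.I);
       -((δ : ℂ) / (ω : ℂ)) * Complex.I * Complex.exp ((θ : ℂ) * Complex.I), 1]

lemma ctfin2 (a b c d : ℂ) : !![a,b;c,d]ᴴ = !![star a, star c; star b, star d] := by
  ext i j
  fin_cases i <;> fin_cases j <;> simp [conjTranspose_apply]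

set_option maxHeartbeats 2000000 in
lemma key_intertwine (δ θ ω Ω : ℝ)
    (hΩ2 : (Ω : ℂ) ^ 2 = (ω : ℂ) ^ 2 - (δ : ℂ) ^ 2)
    (hω0 : (ω : ℂ) ≠ 0) :
    (!![1, ((δ : ℂ) / (ω : ℂ)) * Complex.I * Complex.exp (-(θ : ℂ) * Complex.I);
       -((δ : ℂ) / (ω : ℂ)) * Complex.I * Complex.exp ((θ : ℂ) * Complex.I), 1] *
     (!![(-ω : ℂ), Complex.exp (-(θ : ℂ) * Complex.I) * ((Ω : ℂ) - (δ : ℂ) * Complex.I);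
       -Complex.exp ((θ : ℂ) * Complex.I) * ((Ω : ℂ) + (δ : ℂ) * Complex.I), (ω : ℂ)] *
      !![(-ω : ℂ), -Complex.exp (-(θ : ℂ) * Complex.I) * ((Ω : ℂ) + (δ : ℂ) * Complex.I);
       Complex.exp ((θ : ℂ) * Complex.I) * ((Ω : ℂ) - (δ : ℂ) * Complex.I), (ω : ℂ)])) =
    ((!![(-ω : ℂ), Complex.exp (-(θ : ℂ) * Complex.I) * ((Ω : ℂ) - (δ : ℂ) * Complex.I);
       -Complex.exp ((θ : ℂ) * Complex.I) * ((Ω : ℂ) + (δ : ℂ) * Complex.I), (ω : ℂ)] *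
      !![(-ω : ℂ), -Complex.exp (-(θ : ℂ) * Complex.I) * ((Ω : ℂ) + (δ : ℂ) * Complex.I);
       Complex.exp ((θ : ℂ) * Complex.I) * ((Ω : ℂ) - (δ : ℂ) * Complex.I), (ω : ℂ)])ᴴ *
     !![1, ((δ : ℂ) / (ω : ℂ)) * Complex.I * Complex.exp (-(θ : ℂ) * Complex.I);
       -((δ : ℂ) / (ω : ℂ)) * Complex.I * Complex.exp ((θ : ℂ) * Complex.I), 1]) := by
  have hE0 : Complex.exp ((θ : ℂ) * Complex.I) ≠ 0 := Complex.exp_ne_zero _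
  have hc1 : (starRingEnd ℂ) (Complex.exp ((θ : ℂ) * Complex.I)) =
      (Complex.exp ((θ : ℂ) * Complex.I))⁻¹ := by
    rw [← Complex.exp_conj, ← Complex.exp_neg]
    congr 1
    simp [Complex.conj_ofReal]
  have hen : Complex.exp (-(θ : ℂ) * Complex.I) = (Complex.exp ((θ : ℂ) * Complex.I))⁻¹ := by
    rw [← Complex.exp_neg]; ring_nf
  have hI3 : Complex.I ^ 3 = -Complex.I := by
    rw [pow_succ, Complex.I_sq]; ring
  have hI4 : Complex.I ^ 4 = 1 := by
    rw [pow_succ, hI3]; simp [Complex.I_mul_I]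
  have hI5 : Complex.I ^ 5 = Complex.I := by rw [pow_succ, hI4, one_mul]
  have hI6 : Complex.I ^ 6 = -1 := by rw [pow_succ, hI5, Complex.I_mul_I]
  rw [Matrix.mul_fin_two, ctfin2, Matrix.mul_fin_two, Matrix.mul_fin_two]
  simp only [hen, star_add, star_mul', star_neg, star_one, RCLike.star_def, map_inv₀,
    _root_.map_mul, map_add, map_sub, map_neg, map_div₀, _root_.map_one,
    hc1, Complex.conj_ofReal, Complex.conj_I]
  ext i j
  fin_cases i <;> fin_cases j <;>
    simp only [Matrix.cons_val', Matrix.cons_val_zero, Matrix.cons_val_one, Matrix.head_cons,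
      Matrix.head_fin_const, Matrix.empty_val', Matrix.cons_val_fin_one, Fin.isValue] <;>
    field_simp <;>
    (linear_combination (norm := skip) hΩ2) <;>
    ring_nf <;>
    (try simp only [Complex.I_sq, hI3, hI4, hI5, hI6]) <;>
    (first | ring1 | linear_combination hΩ2 | linear_combination -hΩ2)

theorem intertwining_relation (δ θ ω Ω : ℝ) (hω : 0 < ω) (hδω : δ ^ 2 < ω ^ 2)
    (hΩ : Ω = Real.sqrt (ω ^ 2 - δ ^ 2)) :
    Spsi δ θ ω Ω * (pfb δ θ ω Ω * pfa δ θ ω Ω) =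
      (pfb δ θ ω Ω * pfa δ θ ω Ω)ᴴ * Spsi δ θ ω Ω := by
  have hΩ2 : (Ω : ℂ) ^ 2 = (ω : ℂ) ^ 2 - (δ : ℂ) ^ 2 := by
    have : Ω ^ 2 = ω ^ 2 - δ ^ 2 := by
      rw [hΩ, Real.sq_sqrt (by linarith)]
    exact_mod_cast congrArg (fun x : ℝ => (x : ℂ)) this
  have hω0 : (ω : ℂ) ≠ 0 := by exact_mod_cast hω.ne'
  have key := key_intertwine δ θ ω Ω hΩ2 hω0
  have hstar1 : star ((1 : ℂ) / (2 * (Ω : ℂ))) = (1 : ℂ) / (2 * (Ω : ℂ)) := by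
    simp [Complex.conj_ofReal]
  unfold Spsi pfa pfb
  rw [Matrix.smul_mul, Matrix.mul_smul, Matrix.smul_mul, Matrix.mul_smul, Matrix.mul_smul,
    Matrix.conjTranspose_smul, Matrix.conjTranspose_smul, hstar1,
    Matrix.smul_mul, Matrix.smul_mul, key]
  rw [Matrix.mul_smul]
  match_scalars
  ring
end
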